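/- If the association scheme S satisfies O^ϑ(S) ⊆ O_ϑ(S) and ⟨S_{p'}⟩ = S, where S_{p'} = {R_i ∈ S : p ∤ k_i} and ⟨S_{p'}⟩ is the smallest closed subset containing S_{p'}, then S is a p-transitive scheme. -/
import Mathlib


open scoped Classical

/-- An association scheme of class `d` on a nonempty finite set `X`:
a partition of `X × X` into nonempty relations `r 0, …, r d` with
`r 0` the diagonal, closed under converse (`star`), and with
intersection numbers `pNum i j k`. -/
structure AssocScheme (X : Type*) [Fintype X] [Nonempty X] (d : ℕ) where
  r : Fin (d + 1) → Set (X × X)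
  r_nonempty : ∀ i, (r i).Nonempty
  existsUnique_rel : ∀ q : X × X, ∃! i, q ∈ r i
  r_zero : r 0 = {q : X × X | q.1 = q.2}
  star : Fin (d + 1) → Fin (d + 1)
  mem_star : ∀ (i : Fin (d + 1)) (q : X × X), q ∈ r (star i) ↔ (q.2, q.1) ∈ r i
  pNum : Fin (d + 1) → Fin (d + 1) → Fin (d + 1) → ℕ
  ncard_eq : ∀ (i j k : Fin (d + 1)), ∀ q ∈ r k,
    {z : X | (q.1, z) ∈ r i ∧ (z, q.2) ∈ r j}.ncard = pNum i j k

namespace AssocScheme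

variable {X : Type*} [Fintype X] [Nonempty X] {d : ℕ}

/-- The valency `k_i = p_{i i*}^0` of the relation `R_i`. -/
def val (S : AssocScheme X d) (i : Fin (d + 1)) : ℕ := S.pNum i (S.star i) 0

/-- The complex product `UV = {R_k : p_{uv}^k > 0 for some R_u ∈ U, R_v ∈ V}`. -/
def cmul (S : AssocScheme X d) (U V : Set (Fin (d + 1))) : Set (Fin (d + 1)) :=
  {k | ∃ u ∈ U, ∃ v ∈ V, 0 < S.pNum u v k}

/-- A nonempty subset `T` is closed if `T*T ⊆ T`. -/
def IsClosedSubset (S : AssocScheme X d) (T : Set (Fin (d + 1))) : Prop :=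
  T.Nonempty ∧ S.cmul (S.star '' T) T ⊆ T

/-- The thin radical `O_ϑ(S) = {R_i : k_i = 1}`. -/
def thinRadical (S : AssocScheme X d) : Set (Fin (d + 1)) := {i | S.val i = 1}

/-- A closed subset `T` is strongly normal if `R_{i*} T R_i ⊆ T` for all `i`. -/
def IsStronglyNormal (S : AssocScheme X d) (T : Set (Fin (d + 1))) : Prop :=
  S.IsClosedSubset T ∧ ∀ i : Fin (d + 1), S.cmul (S.cmul {S.star i} T) {i} ⊆ T

/-- The thin residue `O^ϑ(S)`: the intersection of all strongly normal closed subsets. -/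
def thinResidue (S : AssocScheme X d) : Set (Fin (d + 1)) :=
  ⋂₀ {T | S.IsStronglyNormal T}

/-- `⟨H⟩`: the intersection of all closed subsets containing `H`. -/
def closure (S : AssocScheme X d) (H : Set (Fin (d + 1))) : Set (Fin (d + 1)) :=
  ⋂₀ {T | S.IsClosedSubset T ∧ H ⊆ T}

/-- The adjacency matrix `A̅_i` of `R_i`, with entries in `𝔽`. -/
noncomputable def adj (S : AssocScheme X d) (𝔽 : Type*) [Field 𝔽] (i : Fin (d + 1)) :
    Matrix X X 𝔽 :=
  Matrix.of fun x y => if (x, y) ∈ S.r i then 1 else 0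

/-- `v` spans a trivial `𝔽S`-submodule of the regular `𝔽S`-module:
`v` is a nonzero element of `𝔽S` with `A̅_i v = k̅_i v` for all `i`. -/
def IsTrivialVector (S : AssocScheme X d) (𝔽 : Type*) [Field 𝔽] (v : Matrix X X 𝔽) : Prop :=
  v ≠ 0 ∧ v ∈ Submodule.span 𝔽 (Set.range (S.adj 𝔽)) ∧
    ∀ i : Fin (d + 1), S.adj 𝔽 i * v = (S.val i : 𝔽) • v

/-- `S` is `p`-transitive over `𝔽` (of characteristic `p`) if the regular `𝔽S`-module
contains a unique trivial `𝔽S`-submodule. -/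
def IsPTransitive (S : AssocScheme X d) (𝔽 : Type*) [Field 𝔽] : Prop :=
  ∃! W : Submodule 𝔽 (Matrix X X 𝔽),
    ∃ v : Matrix X X 𝔽, S.IsTrivialVector 𝔽 v ∧ W = Submodule.span 𝔽 {v}

/-- A subset `T ⊆ S` is singular if `O_ϑ(S) ⊆ T` and
`R_x R_{y*} R_y R_z ⊆ T` for all `R_x ∈ O_ϑ(S)`, `R_y ∈ S`, `R_z ∈ T`. -/
def IsSingular (S : AssocScheme X d) (T : Set (Fin (d + 1))) : Prop :=
  S.thinRadical ⊆ T ∧ ∀ x ∈ S.thinRadical, ∀ y : Fin (d + 1), ∀ z ∈ T,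
    S.cmul (S.cmul (S.cmul {x} {S.star y}) {y}) {z} ⊆ T

/-- `S_{p'} = {R_i ∈ S : p ∤ k_i}`. -/
def pPrimePart (S : AssocScheme X d) (p : ℕ) : Set (Fin (d + 1)) :=
  {i | ¬ p ∣ S.val i}

end AssocScheme

section Auxiliary

namespace AssocScheme

open Finset

variable {X : Type*} [Fintype X] [Nonempty X] {d : ℕ} (S : AssocScheme X d)

lemma mem_r_unique {i j : Fin (d + 1)} {q : X × X} (hi : q ∈ S.r i) (hj : q ∈ S.r j) :
    i = j := by
  obtain ⟨k, -, hk⟩ := S.existsUnique_rel q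
  rw [hk i hi, hk j hj]

lemma mem_r_zero {x y : X} : (x, y) ∈ S.r 0 ↔ x = y := by rw [S.r_zero]; rfl

lemma card_row (i : Fin (d + 1)) (x : X) : {z : X | (x, z) ∈ S.r i}.ncard = S.val i := by
  have h0 : ((x, x) : X × X) ∈ S.r 0 := by rw [S.r_zero]; rfl
  have h : {z : X | (x, z) ∈ S.r i ∧ (z, x) ∈ S.r (S.star i)}.ncard
      = S.pNum i (S.star i) 0 := S.ncard_eq i (S.star i) 0 (x, x) h0
  unfold val
  rw [← h]
  congr 1
  ext z
  exact ⟨fun hz => ⟨hz, (S.mem_star i (z, x)).mpr hz⟩, fun hz => hz.1⟩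

lemma sum_row (i : Fin (d + 1)) (x : X) :
    ∑ z : X, (if (x, z) ∈ S.r i then 1 else 0) = S.val i := by
  have h := S.card_row i x
  rwa [Set.ncard_eq_toFinset_card', Set.toFinset_setOf, Finset.card_filter] at h

lemma val_pos (i : Fin (d + 1)) : 0 < S.val i := by
  obtain ⟨⟨x, y⟩, hxy⟩ := S.r_nonempty i
  rw [← S.card_row i x, Set.ncard_pos (Set.toFinite _)]
  exact ⟨y, hxy⟩

/-- a triangle witnessing positivity of an intersection number -/
def tri (i j k : Fin (d + 1)) : Prop :=
  ∃ x y z : X, (x, y) ∈ S.r i ∧ (y, z) ∈ S.r j ∧ (x, z) ∈ S.r k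

lemma pNum_pos_iff {i j k : Fin (d + 1)} : 0 < S.pNum i j k ↔ S.tri i j k := by
  constructor
  · intro h
    obtain ⟨⟨x, y⟩, hxy⟩ := S.r_nonempty k
    have hc : {z : X | (x, z) ∈ S.r i ∧ (z, y) ∈ S.r j}.ncard = S.pNum i j k :=
      S.ncard_eq i j k (x, y) hxy
    have hne : {z : X | (x, z) ∈ S.r i ∧ (z, y) ∈ S.r j}.Nonempty := by
      apply Set.nonempty_of_ncard_ne_zero; omega
    obtain ⟨z, hz1, hz2⟩ := hne
    exact ⟨x, z, y, hz1, hz2, hxy⟩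
  · rintro ⟨x, y, z, h1, h2, h3⟩
    rw [← S.ncard_eq i j k (x, z) h3, Set.ncard_pos (Set.toFinite _)]
    exact ⟨y, h1, h2⟩

lemma tri_rot {i j k : Fin (d + 1)} (h : S.tri i j k) : S.tri (S.star i) k j := by
  obtain ⟨x, y, z, h1, h2, h3⟩ := h
  exact ⟨y, x, z, (S.mem_star i (y, x)).mpr h1, h3, h2⟩

lemma tri_star {i j k : Fin (d + 1)} (h : S.tri i j k) :
    S.tri (S.star j) (S.star i) (S.star k) := by
  obtain ⟨x, y, z, h1, h2, h3⟩ := h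
  exact ⟨z, y, x, (S.mem_star j (z, y)).mpr h2, (S.mem_star i (y, x)).mpr h1,
    (S.mem_star k (z, x)).mpr h3⟩

lemma r_inj {i j : Fin (d + 1)} (h : S.r i = S.r j) : i = j := by
  obtain ⟨q, hq⟩ := S.r_nonempty i
  exact S.mem_r_unique hq (h ▸ hq)

lemma star_star (i : Fin (d + 1)) : S.star (S.star i) = i := by
  apply S.r_inj
  ext ⟨x, y⟩
  rw [S.mem_star, S.mem_star]

lemma star_zero : S.star (0 : Fin (d + 1)) = 0 := by
  apply S.r_inj
  ext ⟨x, y⟩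
  rw [S.mem_star]
  simp [S.mem_r_zero, eq_comm]

lemma pNum_i_zero_pos (i : Fin (d + 1)) : 0 < S.pNum i 0 i := by
  rw [S.pNum_pos_iff]
  obtain ⟨⟨x, y⟩, h⟩ := S.r_nonempty i
  exact ⟨x, y, y, h, S.mem_r_zero.mpr rfl, h⟩

lemma pNum_zero_pos_eq {i j : Fin (d + 1)} (h : 0 < S.pNum 0 i j) : i = j := by
  obtain ⟨x, y, z, h1, h2, h3⟩ := S.pNum_pos_iff.mp h
  obtain rfl : x = y := S.mem_r_zero.mp h1
  exact S.mem_r_unique h2 h3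

lemma val_star (i : Fin (d + 1)) : S.val (S.star i) = S.val i := by
  have key : Fintype.card X * S.val i = Fintype.card X * S.val (S.star i) := by
    calc Fintype.card X * S.val i
        = ∑ x : X, ∑ z : X, (if (x, z) ∈ S.r i then 1 else 0) := by
          rw [Finset.sum_congr rfl fun x _ => S.sum_row i x, Finset.sum_const,
            Finset.card_univ, smul_eq_mul]
      _ = ∑ z : X, ∑ x : X, (if (z, x) ∈ S.r (S.star i) then 1 else 0) := by
          rw [Finset.sum_comm]
          refine Finset.sum_congr rfl fun z _ => Finset.sum_congr rfl fun x _ => ?_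
          congr 1
          rw [eq_iff_iff]
          exact (S.mem_star i (z, x)).symm
      _ = Fintype.card X * S.val (S.star i) := by
          rw [Finset.sum_congr rfl fun z _ => S.sum_row (S.star i) z, Finset.sum_const,
            Finset.card_univ, smul_eq_mul]
  exact (Nat.eq_of_mul_eq_mul_left Fintype.card_pos key).symm

lemma pNum_le_val (i j k : Fin (d + 1)) : S.pNum i j k ≤ S.val i := by
  obtain ⟨q, hq⟩ := S.r_nonempty k
  rw [← S.ncard_eq i j k q hq, ← S.card_row i q.1]
  exact Set.ncard_le_ncard (fun z hz => hz.1) (Set.toFinite _)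

lemma sum_pNum_right (i k : Fin (d + 1)) : ∑ j, S.pNum i j k = S.val i := by
  obtain ⟨⟨x, y⟩, hq⟩ := S.r_nonempty k
  have hp : ∀ j, S.pNum i j k = ∑ z : X, (if (x, z) ∈ S.r i ∧ (z, y) ∈ S.r j then 1 else 0) := by
    intro j
    rw [← S.ncard_eq i j k (x, y) hq, Set.ncard_eq_toFinset_card', Set.toFinset_setOf,
      Finset.card_filter]
  rw [Finset.sum_congr rfl fun j _ => hp j, Finset.sum_comm, ← S.sum_row i x]
  refine Finset.sum_congr rfl fun z _ => ?_
  by_cases hxz : (x, z) ∈ S.r i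
  · simp only [hxz, true_and, if_true]
    obtain ⟨j₀, hj₀, huniq⟩ := S.existsUnique_rel (z, y)
    rw [Finset.sum_eq_single j₀]
    · rw [if_pos hj₀]
    · intro b _ hb
      rw [if_neg fun hzb => hb (huniq b hzb)]
    · intro h; exact absurd (Finset.mem_univ _) h
  · simp [hxz]

lemma sum_pNum_val (i j : Fin (d + 1)) :
    ∑ m, S.pNum i j m * S.val m = S.val i * S.val j := by
  have x : X := Classical.arbitrary X
  have hbool : ∀ (P Q : Prop) [Decidable P] [Decidable Q],
      (if P then (1 : ℕ) else 0) * (if Q then 1 else 0) = if P ∧ Q then 1 else 0 := by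
    intro P Q _ _
    by_cases hP : P <;> by_cases hQ : Q <;> simp [hP, hQ]
  have h1 : ∑ z : X, ∑ y : X,
      (if (x, z) ∈ S.r i then 1 else 0) * (if (z, y) ∈ S.r j then 1 else 0)
      = S.val i * S.val j := by
    calc ∑ z : X, ∑ y : X, (if (x, z) ∈ S.r i then 1 else 0) * (if (z, y) ∈ S.r j then 1 else 0)
        = ∑ z : X, (if (x, z) ∈ S.r i then 1 else 0) * S.val j := by
          refine Finset.sum_congr rfl fun z _ => ?_
          rw [← Finset.mul_sum, S.sum_row j z]
      _ = S.val i * S.val j := by rw [← Finset.sum_mul, S.sum_row i x]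
  have h2 : ∑ z : X, ∑ y : X,
      (if (x, z) ∈ S.r i then 1 else 0) * (if (z, y) ∈ S.r j then 1 else 0)
      = ∑ m, S.pNum i j m * S.val m := by
    rw [Finset.sum_comm]
    have inner : ∀ y : X,
        ∑ z : X, (if (x, z) ∈ S.r i then 1 else 0) * (if (z, y) ∈ S.r j then 1 else 0)
        = ∑ m, (if (x, y) ∈ S.r m then S.pNum i j m else 0) := by
      intro y
      obtain ⟨m₀, hm₀, huniq⟩ := S.existsUnique_rel (x, y)
      rw [Finset.sum_eq_single m₀]
      · rw [if_pos hm₀, ← S.ncard_eq i j m₀ (x, y) hm₀, Set.ncard_eq_toFinset_card',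
          Set.toFinset_setOf, Finset.card_filter]
        exact Finset.sum_congr rfl fun z _ => hbool _ _
      · intro b _ hb
        rw [if_neg fun hm => hb (huniq b hm)]
      · intro h; exact absurd (Finset.mem_univ _) h
    rw [Finset.sum_congr rfl fun y _ => inner y, Finset.sum_comm]
    refine Finset.sum_congr rfl fun m _ => ?_
    rw [← S.sum_row m x, Finset.mul_sum]
    refine Finset.sum_congr rfl fun y _ => ?_
    by_cases h : (x, y) ∈ S.r m <;> simp [h]
  rw [← h2, h1]

lemma pNum_thin_star {t : Fin (d + 1)} (ht : S.val t = 1) {k : Fin (d + 1)}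
    (h : 0 < S.pNum t (S.star t) k) : k = 0 := by
  have hsum : ∑ m, S.pNum t (S.star t) m * S.val m = 1 := by
    rw [S.sum_pNum_val, S.val_star, ht]
  by_contra hk
  have h0 : 1 ≤ S.pNum t (S.star t) 0 * S.val 0 := by
    have h1 : S.pNum t (S.star t) 0 = S.val t := rfl
    rw [h1, ht]
    exact Nat.one_le_iff_ne_zero.mpr (by have := S.val_pos 0; omega)
  have hk1 : 1 ≤ S.pNum t (S.star t) k * S.val k := Nat.mul_pos h (S.val_pos k)
  have hle : ∑ m ∈ ({0, k} : Finset (Fin (d + 1))), S.pNum t (S.star t) m * S.val m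
      ≤ ∑ m, S.pNum t (S.star t) m * S.val m :=
    Finset.sum_le_sum_of_subset (Finset.subset_univ _)
  rw [hsum, Finset.sum_pair (fun h => hk (h.symm))] at hle
  omega

lemma assocL {a t m b z : Fin (d + 1)} (h1 : 0 < S.pNum a t m) (h2 : 0 < S.pNum b z t) :
    ∃ k, 0 < S.pNum a b k ∧ 0 < S.pNum k z m := by
  obtain ⟨x, w, y, hxw, hwy, hxy⟩ := S.pNum_pos_iff.mp h1
  have hc : {c : X | (w, c) ∈ S.r b ∧ (c, y) ∈ S.r z}.ncard = S.pNum b z t :=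
    S.ncard_eq b z t (w, y) hwy
  have hne : {c : X | (w, c) ∈ S.r b ∧ (c, y) ∈ S.r z}.Nonempty := by
    apply Set.nonempty_of_ncard_ne_zero; omega
  obtain ⟨c, hc1, hc2⟩ := hne
  obtain ⟨k, hk⟩ := (S.existsUnique_rel (x, c)).exists
  exact ⟨k, S.pNum_pos_iff.mpr ⟨x, w, c, hxw, hc1, hk⟩,
    S.pNum_pos_iff.mpr ⟨x, c, y, hk, hc2, hxy⟩⟩

lemma assocR {a b k z m : Fin (d + 1)} (h1 : 0 < S.pNum a b k) (h2 : 0 < S.pNum k z m) :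
    ∃ t, 0 < S.pNum b z t ∧ 0 < S.pNum a t m := by
  obtain ⟨x, w, y, hxw, hwy, hxy⟩ := S.pNum_pos_iff.mp h2
  have hc : {c : X | (x, c) ∈ S.r a ∧ (c, w) ∈ S.r b}.ncard = S.pNum a b k :=
    S.ncard_eq a b k (x, w) hxw
  have hne : {c : X | (x, c) ∈ S.r a ∧ (c, w) ∈ S.r b}.Nonempty := by
    apply Set.nonempty_of_ncard_ne_zero; omega
  obtain ⟨c, hc1, hc2⟩ := hne
  obtain ⟨t, ht⟩ := (S.existsUnique_rel (c, y)).exists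
  exact ⟨t, S.pNum_pos_iff.mpr ⟨c, w, y, hc2, hwy, ht⟩,
    S.pNum_pos_iff.mpr ⟨x, c, y, hc1, ht, hxy⟩⟩

lemma thin_mul_unique {t i m m' : Fin (d + 1)} (ht : S.val t = 1)
    (h1 : 0 < S.pNum t i m) (h2 : 0 < S.pNum t i m') : m = m' := by
  have hro : 0 < S.pNum (S.star t) m i := S.pNum_pos_iff.mpr (S.tri_rot (S.pNum_pos_iff.mp h1))
  obtain ⟨k, hk1, hk2⟩ := S.assocL h2 hro
  have hk0 : k = 0 := S.pNum_thin_star ht hk1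
  subst hk0
  exact S.pNum_zero_pos_eq hk2

lemma thin_of_mem_uustar (httr : S.thinResidue ⊆ S.thinRadical) {u t : Fin (d + 1)}
    (h : 0 < S.pNum u (S.star u) t) : S.val t = 1 := by
  apply httr
  intro T hT
  obtain ⟨⟨⟨t₀, ht₀⟩, hclosed⟩, hnorm⟩ := hT
  have h0 : (0 : Fin (d + 1)) ∈ T := by
    apply hclosed
    refine ⟨S.star t₀, Set.mem_image_of_mem _ ht₀, t₀, ht₀, ?_⟩
    have he : S.pNum (S.star t₀) t₀ 0 = S.val (S.star t₀) := by
      unfold val; rw [S.star_star]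
    rw [he]
    exact S.val_pos _
  apply hnorm (S.star u)
  refine ⟨u, ⟨S.star (S.star u), rfl, 0, h0, ?_⟩, S.star u, rfl, h⟩
  rw [S.star_star]
  exact S.pNum_i_zero_pos u

section Field

variable {𝔽 : Type*} [Field 𝔽]

lemma adj_mul_adj (j i : Fin (d + 1)) :
    S.adj 𝔽 j * S.adj 𝔽 i = ∑ k, (S.pNum j i k : 𝔽) • S.adj 𝔽 k := by
  ext x y
  rw [Matrix.mul_apply]
  obtain ⟨k₀, hk₀, huniq⟩ := S.existsUnique_rel (x, y)
  have hR : (∑ k, (S.pNum j i k : 𝔽) • S.adj 𝔽 k) x y = (S.pNum j i k₀ : 𝔽) := by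
    rw [Matrix.sum_apply]
    rw [Finset.sum_eq_single k₀]
    · simp only [Matrix.smul_apply, adj, Matrix.of_apply, smul_eq_mul, if_pos hk₀, mul_one]
    · intro b _ hb
      simp only [Matrix.smul_apply, adj, Matrix.of_apply, smul_eq_mul]
      rw [if_neg fun hm => hb (huniq b hm), mul_zero]
    · intro h; exact absurd (Finset.mem_univ _) h
  rw [hR]
  have hterm : ∀ z : X, S.adj 𝔽 j x z * S.adj 𝔽 i z y
      = if (x, z) ∈ S.r j ∧ (z, y) ∈ S.r i then (1 : 𝔽) else 0 := by
    intro z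
    simp only [adj, Matrix.of_apply]
    by_cases h1 : (x, z) ∈ S.r j <;> by_cases h2 : (z, y) ∈ S.r i <;> simp [h1, h2]
  rw [Finset.sum_congr rfl fun z _ => hterm z, Finset.sum_boole]
  congr 1
  rw [← S.ncard_eq j i k₀ (x, y) hk₀, Set.ncard_eq_toFinset_card', Set.toFinset_setOf]

lemma coeff_eq {f g : Fin (d + 1) → 𝔽}
    (h : ∑ k, f k • S.adj 𝔽 k = ∑ k, g k • S.adj 𝔽 k) (k : Fin (d + 1)) : f k = g k := by
  obtain ⟨⟨x, y⟩, hq⟩ := S.r_nonempty k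
  have hf : ∀ f : Fin (d + 1) → 𝔽, (∑ m, f m • S.adj 𝔽 m) x y = f k := by
    intro f
    rw [Matrix.sum_apply, Finset.sum_eq_single k]
    · simp only [Matrix.smul_apply, adj, Matrix.of_apply, smul_eq_mul, if_pos hq, mul_one]
    · intro b _ hb
      simp only [Matrix.smul_apply, adj, Matrix.of_apply, smul_eq_mul]
      rw [if_neg fun hm => hb (S.mem_r_unique hm hq), mul_zero]
    · intro h; exact absurd (Finset.mem_univ _) h
  have := congrArg (fun M : Matrix X X 𝔽 => M x y) h
  simpa only [hf] using this

lemma adj_mul_sum (j : Fin (d + 1)) :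
    S.adj 𝔽 j * (∑ i, S.adj 𝔽 i) = (S.val j : 𝔽) • ∑ i, S.adj 𝔽 i := by
  rw [Finset.mul_sum, Finset.smul_sum]
  calc ∑ i, S.adj 𝔽 j * S.adj 𝔽 i
      = ∑ i, ∑ k, (S.pNum j i k : 𝔽) • S.adj 𝔽 k :=
        Finset.sum_congr rfl fun i _ => S.adj_mul_adj j i
    _ = ∑ k, ∑ i, (S.pNum j i k : 𝔽) • S.adj 𝔽 k := Finset.sum_comm
    _ = ∑ k, (S.val j : 𝔽) • S.adj 𝔽 k := by
        refine Finset.sum_congr rfl fun k _ => ?_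
        rw [← Finset.sum_smul]
        congr 1
        rw [← Nat.cast_sum, S.sum_pNum_right j k]

/-- the auxiliary "good index" predicate used in the closure argument -/
def IsGood (c : Fin (d + 1) → 𝔽) (u : Fin (d + 1)) : Prop :=
  ∀ z m, c z = c 0 → 0 < S.pNum u z m → c m = c 0

lemma isGood_zero (c : Fin (d + 1) → 𝔽) : S.IsGood c 0 := by
  intro z m hz hm
  rw [← S.pNum_zero_pos_eq hm]
  exact hz

lemma isGood_chain {c : Fin (d + 1) → 𝔽} {a b k : Fin (d + 1)}
    (ha : S.IsGood c a) (hb : S.IsGood c b) (h : 0 < S.pNum a b k) : S.IsGood c k := by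
  intro z m hz hm
  obtain ⟨t, ht1, ht2⟩ := S.assocR h hm
  exact ha t m (hb z t hz ht1) ht2

lemma thin_step {c : Fin (d + 1) → 𝔽}
    (hE : ∀ j k, ∑ i, (S.pNum j i k : 𝔽) * c i = (S.val j : 𝔽) * c k)
    {t i m : Fin (d + 1)} (ht : S.val t = 1) (h : 0 < S.pNum t i m) : c m = c i := by
  have hts : S.val (S.star t) = 1 := by rw [S.val_star]; exact ht
  have key := hE t m
  rw [Finset.sum_eq_single i] at key
  · have hp1 : S.pNum t i m = 1 := le_antisymm (ht ▸ S.pNum_le_val t i m) h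
    rw [hp1, ht, Nat.cast_one, one_mul, one_mul] at key
    exact key.symm
  · intro s _ hs
    have hzero : S.pNum t s m = 0 := by
      by_contra hpos
      have hpos' : 0 < S.pNum t s m := Nat.pos_of_ne_zero hpos
      have hr1 : 0 < S.pNum (S.star t) m s :=
        S.pNum_pos_iff.mpr (S.tri_rot (S.pNum_pos_iff.mp hpos'))
      have hr2 : 0 < S.pNum (S.star t) m i :=
        S.pNum_pos_iff.mpr (S.tri_rot (S.pNum_pos_iff.mp h))
      exact hs (S.thin_mul_unique hts hr1 hr2)
    rw [hzero, Nat.cast_zero, zero_mul]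
  · intro h; exact absurd (Finset.mem_univ _) h

lemma isGood_of_not_dvd {p : ℕ} [Fact p.Prime] [CharP 𝔽 p] {c : Fin (d + 1) → 𝔽}
    (httr : S.thinResidue ⊆ S.thinRadical)
    (hE : ∀ j k, ∑ i, (S.pNum j i k : 𝔽) * c i = (S.val j : 𝔽) * c k)
    {u : Fin (d + 1)} (hu : ¬ p ∣ S.val u) : S.IsGood c u := by
  intro z m hz hm
  have hequal : ∀ i, 0 < S.pNum u z i → c i = c m := by
    intro i hi
    have hro : 0 < S.pNum (S.star u) i z :=
      S.pNum_pos_iff.mpr (S.tri_rot (S.pNum_pos_iff.mp hi))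
    obtain ⟨t, ht1, ht2⟩ := S.assocL hm hro
    have hthin : S.val t = 1 := S.thin_of_mem_uustar httr ht1
    exact (S.thin_step hE hthin ht2).symm
  have hkey : (S.val (S.star u) : 𝔽) * c z = (S.val (S.star u) : 𝔽) * c m := by
    rw [← hE (S.star u) z]
    calc ∑ i, (S.pNum (S.star u) i z : 𝔽) * c i
        = ∑ i, (S.pNum (S.star u) i z : 𝔽) * c m := by
          refine Finset.sum_congr rfl fun i _ => ?_
          rcases Nat.eq_zero_or_pos (S.pNum (S.star u) i z) with h0 | hpos
          · rw [h0, Nat.cast_zero, zero_mul, zero_mul]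
          · have : 0 < S.pNum u z i := by
              have := S.tri_rot (S.pNum_pos_iff.mp hpos)
              rw [S.star_star] at this
              exact S.pNum_pos_iff.mpr this
            rw [hequal i this]
      _ = (S.val (S.star u) : 𝔽) * c m := by
          rw [← Finset.sum_mul, ← Nat.cast_sum, S.sum_pNum_right]
  rw [S.val_star] at hkey
  have hcast : (S.val u : 𝔽) ≠ 0 := by
    rw [Ne, CharP.cast_eq_zero_iff 𝔽 p]
    exact hu
  have := mul_left_cancel₀ hcast hkey
  rw [← this]
  exact hz

end Field

end AssocScheme

end Auxiliary

/-- If `O^ϑ(S) ⊆ O_ϑ(S)` and `⟨S_{p'}⟩ = S`, then `S` is `p`-transitive. -/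
theorem isPTransitive_of_closure_pPrimePart_eq_univ
    {X : Type*} [Fintype X] [Nonempty X] {d : ℕ} (S : AssocScheme X d)
    (𝔽 : Type*) [Field 𝔽] (p : ℕ) [Fact p.Prime] [CharP 𝔽 p]
    (httr : S.thinResidue ⊆ S.thinRadical)
    (hcl : S.closure (S.pPrimePart p) = Set.univ) :
    S.IsPTransitive 𝔽 := by
  classical
  set Jm : Matrix X X 𝔽 := ∑ i, S.adj 𝔽 i with hJm
  have hJapp : ∀ x y : X, Jm x y = 1 := by
    intro x y
    obtain ⟨k₀, hk₀, huniq⟩ := S.existsUnique_rel (x, y)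
    rw [hJm, Matrix.sum_apply, Finset.sum_eq_single k₀]
    · simp [AssocScheme.adj, hk₀]
    · intro b _ hb
      simp only [AssocScheme.adj, Matrix.of_apply]
      rw [if_neg fun hm => hb (S.mem_r_unique hm hk₀)]
    · intro h; exact absurd (Finset.mem_univ _) h
  have hJne : Jm ≠ 0 := by
    intro h
    have x := Classical.arbitrary X
    have h1 := hJapp x x
    rw [h] at h1
    simp at h1
  have hJtriv : S.IsTrivialVector 𝔽 Jm := by
    refine ⟨hJne, ?_, fun j => S.adj_mul_sum j⟩
    exact Submodule.sum_mem _ fun i _ => Submodule.subset_span ⟨i, rfl⟩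
  have key : ∀ v : Matrix X X 𝔽, S.IsTrivialVector 𝔽 v →
      Submodule.span 𝔽 {v} = Submodule.span 𝔽 {Jm} := by
    intro v hv
    obtain ⟨hne, hspan, heig⟩ := hv
    obtain ⟨c, hc⟩ := (Submodule.mem_span_range_iff_exists_fun 𝔽).mp hspan
    have hE : ∀ j k, ∑ i, (S.pNum j i k : 𝔽) * c i = (S.val j : 𝔽) * c k := by
      intro j k
      have h1 : S.adj 𝔽 j * v = ∑ k, (∑ i, (S.pNum j i k : 𝔽) * c i) • S.adj 𝔽 k := by
        rw [← hc, Finset.mul_sum]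
        calc ∑ i, S.adj 𝔽 j * (c i • S.adj 𝔽 i)
            = ∑ i, c i • (S.adj 𝔽 j * S.adj 𝔽 i) := by
              refine Finset.sum_congr rfl fun i _ => ?_
              rw [Matrix.mul_smul]
          _ = ∑ i, c i • ∑ k, (S.pNum j i k : 𝔽) • S.adj 𝔽 k := by
              refine Finset.sum_congr rfl fun i _ => by rw [S.adj_mul_adj]
          _ = ∑ i, ∑ k, (c i * (S.pNum j i k : 𝔽)) • S.adj 𝔽 k := by
              refine Finset.sum_congr rfl fun i _ => ?_
              rw [Finset.smul_sum]
              exact Finset.sum_congr rfl fun k _ => by rw [smul_smul]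
          _ = ∑ k, (∑ i, (S.pNum j i k : 𝔽) * c i) • S.adj 𝔽 k := by
              rw [Finset.sum_comm]
              refine Finset.sum_congr rfl fun k _ => ?_
              rw [Finset.sum_smul]
              exact Finset.sum_congr rfl fun i _ => by rw [mul_comm]
      have h2 : S.adj 𝔽 j * v = ∑ k, ((S.val j : 𝔽) * c k) • S.adj 𝔽 k := by
        rw [heig j, ← hc, Finset.smul_sum]
        exact Finset.sum_congr rfl fun k _ => by rw [smul_smul]
      exact S.coeff_eq (h1.symm.trans h2) k
    have hW : S.IsClosedSubset {u | S.IsGood c u ∧ S.IsGood c (S.star u)} := by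
      constructor
      · exact ⟨0, S.isGood_zero c, by rw [S.star_zero]; exact S.isGood_zero c⟩
      · rintro k ⟨a, ⟨u, ⟨hu1, hu2⟩, rfl⟩, b, ⟨hb1, hb2⟩, hpos⟩
        refine ⟨S.isGood_chain hu2 hb1 hpos, ?_⟩
        have hpos' : 0 < S.pNum (S.star b) u (S.star k) := by
          have h := S.tri_star (S.pNum_pos_iff.mp hpos)
          rw [S.star_star] at h
          exact S.pNum_pos_iff.mpr h
        exact S.isGood_chain hb2 hu1 hpos'
    have hsub : S.pPrimePart p ⊆ {u | S.IsGood c u ∧ S.IsGood c (S.star u)} := by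
      intro u hu
      refine ⟨S.isGood_of_not_dvd (p := p) httr hE hu, S.isGood_of_not_dvd (p := p) httr hE ?_⟩
      rw [S.val_star]; exact hu
    have huniv : (Set.univ : Set (Fin (d + 1)))
        ⊆ {u | S.IsGood c u ∧ S.IsGood c (S.star u)} := by
      rw [← hcl]
      exact Set.sInter_subset_of_mem ⟨hW, hsub⟩
    have hconst : ∀ k, c k = c 0 := fun k =>
      (huniv (Set.mem_univ k)).1 0 k rfl (S.pNum_i_zero_pos k)
    have hveq : v = c 0 • Jm := by
      rw [← hc, hJm, Finset.smul_sum]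
      exact Finset.sum_congr rfl fun k _ => by rw [hconst k]
    have hc0 : c 0 ≠ 0 := by
      intro h
      apply hne
      rw [hveq, h, zero_smul]
    rw [hveq]
    exact Submodule.span_singleton_smul_eq (IsUnit.mk0 _ hc0) Jm
  refine ⟨Submodule.span 𝔽 {Jm}, ⟨Jm, hJtriv, rfl⟩, ?_⟩
  rintro W ⟨v, hv, rfl⟩
  exact key v hv
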